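/- Let $n \in \mathbb{S}^2$, $b s \neq 0$ and $4cs - b \neq 0$. Define $\mathcal{H}_n$ on $\mathbb{S}^3_0$ as above, and define $\mathcal{G}(Q) = \tfrac{1}{bs}\big(Q - (nn^TQ + Qnn^T) + \tfrac{2}{3}(Q : nn^T)I\big) + \tfrac{4b + 2cs}{bs(4cs - b)}(Q : nn^T)\big(nn^T - \tfrac{1}{3}I\big)$. Then for every $Q \in (\mathrm{Ker}\,\mathcal{H}_n)^{\perp} \cap \mathbb{S}^3_0$ one has $\mathcal{G}(\mathcal{H}_n(Q)) = Q$ and $\mathcal{H}_n(\mathcal{G}(Q)) = Q$; in particular, $\mathcal{H}_n$ is a bijection on $(\mathrm{Ker}\,\mathcal{H}_n)^{\perp}$. -/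

import Mathlib

open Matrix BigOperators

noncomputable section

abbrev M3 := Matrix (Fin 3) (Fin 3) ℝ

def frob (A B : M3) : ℝ := ∑ i, ∑ j, A i j * B i j

def Hn (b c s : ℝ) (n : Fin 3 → ℝ) (Q : M3) : M3 :=
  (b * s) • (Q - (vecMulVec n n * Q + Q * vecMulVec n n)
      + (2/3 * frob Q (vecMulVec n n)) • (1 : M3))
    + (2 * c * s ^ 2 * frob Q (vecMulVec n n)) • (vecMulVec n n - (1/3 : ℝ) • (1 : M3))

/-- The candidate inverse `𝒢` of `ℋₙ` on `(Ker ℋₙ)^⊥`. -/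
def Ginv (b c s : ℝ) (n : Fin 3 → ℝ) (Q : M3) : M3 :=
  (1 / (b * s)) • (Q - (vecMulVec n n * Q + Q * vecMulVec n n)
      + (2/3 * frob Q (vecMulVec n n)) • (1 : M3))
    + ((4 * b + 2 * c * s) / (b * s * (4 * c * s - b)) * frob Q (vecMulVec n n)) •
        (vecMulVec n n - (1/3 : ℝ) • (1 : M3))

/-- `(Ker ℋₙ)^⊥ ∩ 𝕊³₀`. -/
def kerPerp (n : Fin 3 → ℝ) : Set M3 :=
  {Q | Qᵀ = Q ∧ Q.trace = 0 ∧ ∀ m : Fin 3 → ℝ, (∑ i, m i * n i) = 0 →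
    frob Q (vecMulVec n m + vecMulVec m n) = 0}

/-!
Write `P = n nᵀ` and `q = Q : P`. For `Q ∈ (Ker ℋₙ)^⊥` the vector `m = Q n - q n` is orthogonal
to `n`, and pairing `Q` with the kernel element `n mᵀ + m nᵀ` gives `2 |m|² = 0`; hence `Q n = q n`,
that is `P Q = Q P = q P`. So on `(Ker ℋₙ)^⊥` both `ℋₙ` and `𝒢` act as `a` on `{q = 0}` and as
`μ` on `P - I/3`, with `(a, μ) = (bs, s(4cs - b)/3)` for `ℋₙ` and the reciprocal pair for `𝒢`.
Maps of this shape preserve `(Ker ℋₙ)^⊥` and compose by multiplying `a` and `μ`.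
-/

lemma frob_add_left (A B C : M3) : frob (A + B) C = frob A C + frob B C := by
  simp only [frob, Matrix.add_apply, add_mul, Finset.sum_add_distrib]

lemma frob_add_right (A B C : M3) : frob A (B + C) = frob A B + frob A C := by
  simp only [frob, Matrix.add_apply, mul_add, Finset.sum_add_distrib]

lemma frob_smul_left (r : ℝ) (A C : M3) : frob (r • A) C = r * frob A C := by
  simp only [frob, Matrix.smul_apply, smul_eq_mul, Finset.mul_sum, mul_assoc]

lemma frob_vecMulVec (A : M3) (u v : Fin 3 → ℝ) : frob A (vecMulVec u v) = u ⬝ᵥ (A *ᵥ v) := by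
  simp only [frob, vecMulVec_apply, dotProduct, mulVec, Finset.mul_sum]
  exact Finset.sum_congr rfl fun i _ => Finset.sum_congr rfl fun j _ => by ring

section
variable {n : Fin 3 → ℝ}

lemma add_mem_kerPerp {A B : M3} (hA : A ∈ kerPerp n) (hB : B ∈ kerPerp n) :
    A + B ∈ kerPerp n :=
  ⟨by rw [transpose_add, hA.1, hB.1], by rw [trace_add, hA.2.1, hB.2.1, add_zero],
    fun m hm => by rw [frob_add_left, hA.2.2 m hm, hB.2.2 m hm, add_zero]⟩

lemma smul_mem_kerPerp (r : ℝ) {A : M3} (hA : A ∈ kerPerp n) : r • A ∈ kerPerp n :=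
  ⟨by rw [transpose_smul, hA.1], by rw [trace_smul, hA.2.1, smul_zero],
    fun m hm => by rw [frob_smul_left, hA.2.2 m hm, mul_zero]⟩

lemma mulVec_eq_frob_smul_of_mem_kerPerp (hn : n ⬝ᵥ n = 1) {Q : M3} (hQ : Q ∈ kerPerp n) :
    Q *ᵥ n = frob Q (vecMulVec n n) • n := by
  obtain ⟨hsymm, -, hker⟩ := hQ
  set q := frob Q (vecMulVec n n) with hq
  obtain ⟨m, hm⟩ : ∃ m, m = Q *ᵥ n - q • n := ⟨_, rfl⟩
  have hQn : Q *ᵥ n = m + q • n := by rw [hm, sub_add_cancel]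
  have hmn : m ⬝ᵥ n = 0 := by
    rw [hm, sub_dotProduct, smul_dotProduct, hn, dotProduct_comm, hq, frob_vecMulVec, smul_eq_mul,
      mul_one, sub_self]
  have hQm : n ⬝ᵥ (Q *ᵥ m) = m ⬝ᵥ (Q *ᵥ n) := by
    rw [dotProduct_mulVec, ← mulVec_transpose, hsymm, dotProduct_comm]
  have hmm : m ⬝ᵥ m = 0 := by
    have h := hker m hmn
    rw [frob_add_right, frob_vecMulVec, frob_vecMulVec, hQm, hQn, dotProduct_add, dotProduct_smul,
      hmn, smul_zero, add_zero] at h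
    linarith
  rw [hQn, dotProduct_self_eq_zero.mp hmm, zero_add]

lemma mul_vecMulVec_self_of_mem_kerPerp (hn : n ⬝ᵥ n = 1) {Q : M3} (hQ : Q ∈ kerPerp n) :
    Q * vecMulVec n n = frob Q (vecMulVec n n) • vecMulVec n n := by
  rw [mul_vecMulVec, mulVec_eq_frob_smul_of_mem_kerPerp hn hQ, smul_vecMulVec]

lemma vecMulVec_self_mul_of_mem_kerPerp (hn : n ⬝ᵥ n = 1) {Q : M3} (hQ : Q ∈ kerPerp n) :
    vecMulVec n n * Q = frob Q (vecMulVec n n) • vecMulVec n n := by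
  rw [vecMulVec_mul, ← mulVec_transpose, hQ.1, mulVec_eq_frob_smul_of_mem_kerPerp hn hQ,
    vecMulVec_smul]

end

def uniaxial (n : Fin 3 → ℝ) : M3 := vecMulVec n n - (1/3 : ℝ) • (1 : M3)

/-- Acts as `a` on `{Q : Q : n nᵀ = 0}` and as `μ` on `uniaxial n`; the factor `3 / 2` is
`1 / (uniaxial n : n nᵀ)`. -/
def scaleUniaxial (a μ : ℝ) (n : Fin 3 → ℝ) (Q : M3) : M3 :=
  a • Q + (3 / 2 * (μ - a) * frob Q (vecMulVec n n)) • uniaxial n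

section
variable {n : Fin 3 → ℝ}

lemma uniaxial_mulVec (v : Fin 3 → ℝ) : uniaxial n *ᵥ v = (n ⬝ᵥ v) • n - (1/3 : ℝ) • v := by
  rw [uniaxial, sub_mulVec, vecMulVec_mulVec, op_smul_eq_smul, smul_mulVec, one_mulVec]

lemma frob_uniaxial (hn : n ⬝ᵥ n = 1) : frob (uniaxial n) (vecMulVec n n) = 2 / 3 := by
  rw [frob_vecMulVec, uniaxial_mulVec, dotProduct_sub, dotProduct_smul, dotProduct_smul, hn]
  norm_num

lemma uniaxial_mem_kerPerp (hn : n ⬝ᵥ n = 1) : uniaxial n ∈ kerPerp n := by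
  refine ⟨?_, ?_, fun m (hm : m ⬝ᵥ n = 0) => ?_⟩
  · rw [uniaxial, transpose_sub, transpose_vecMulVec, transpose_smul, transpose_one]
  · rw [uniaxial, trace_sub, trace_vecMulVec, hn, trace_smul, trace_one, Fintype.card_fin]
    norm_num
  · rw [frob_add_right, frob_vecMulVec, frob_vecMulVec, uniaxial_mulVec, uniaxial_mulVec]
    simp only [dotProduct_sub, dotProduct_smul, smul_eq_mul, hn, dotProduct_comm n m, hm]
    norm_num

lemma scaleUniaxial_mem_kerPerp (hn : n ⬝ᵥ n = 1) (a μ : ℝ) {Q : M3} (hQ : Q ∈ kerPerp n) :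
    scaleUniaxial a μ n Q ∈ kerPerp n :=
  add_mem_kerPerp (smul_mem_kerPerp a hQ) (smul_mem_kerPerp _ (uniaxial_mem_kerPerp hn))

lemma frob_scaleUniaxial (hn : n ⬝ᵥ n = 1) (a μ : ℝ) (Q : M3) :
    frob (scaleUniaxial a μ n Q) (vecMulVec n n) = μ * frob Q (vecMulVec n n) := by
  rw [scaleUniaxial, frob_add_left, frob_smul_left, frob_smul_left, frob_uniaxial hn]
  ring

lemma scaleUniaxial_scaleUniaxial (hn : n ⬝ᵥ n = 1) (a μ a' μ' : ℝ) (Q : M3) :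
    scaleUniaxial a' μ' n (scaleUniaxial a μ n Q) = scaleUniaxial (a' * a) (μ' * μ) n Q := by
  rw [scaleUniaxial, frob_scaleUniaxial hn, scaleUniaxial, scaleUniaxial]
  module

lemma scaleUniaxial_one_one (Q : M3) : scaleUniaxial 1 1 n Q = Q := by
  simp [scaleUniaxial]

lemma eq_scaleUniaxial_of_mem_kerPerp (hn : n ⬝ᵥ n = 1) (a k : ℝ) {Q : M3}
    (hQ : Q ∈ kerPerp n) :
    a • (Q - (vecMulVec n n * Q + Q * vecMulVec n n) + (2/3 * frob Q (vecMulVec n n)) • (1 : M3))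
        + (k * frob Q (vecMulVec n n)) • (vecMulVec n n - (1/3 : ℝ) • (1 : M3))
      = scaleUniaxial a (2 / 3 * k - a / 3) n Q := by
  rw [vecMulVec_self_mul_of_mem_kerPerp hn hQ, mul_vecMulVec_self_of_mem_kerPerp hn hQ,
    scaleUniaxial, uniaxial]
  module

lemma Hn_eq_scaleUniaxial (hn : n ⬝ᵥ n = 1) (b c s : ℝ) {Q : M3} (hQ : Q ∈ kerPerp n) :
    Hn b c s n Q = scaleUniaxial (b * s) (s * (4 * c * s - b) / 3) n Q := by
  rw [Hn, eq_scaleUniaxial_of_mem_kerPerp hn _ _ hQ]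
  congr 1
  ring

lemma Ginv_eq_scaleUniaxial (hn : n ⬝ᵥ n = 1) {b c s : ℝ} (hbs : b * s ≠ 0)
    (h4 : 4 * c * s - b ≠ 0) {Q : M3} (hQ : Q ∈ kerPerp n) :
    Ginv b c s n Q = scaleUniaxial (b * s)⁻¹ (s * (4 * c * s - b) / 3)⁻¹ n Q := by
  have hb : b ≠ 0 := left_ne_zero_of_mul hbs
  have hs : s ≠ 0 := right_ne_zero_of_mul hbs
  rw [Ginv, eq_scaleUniaxial_of_mem_kerPerp hn _ _ hQ]
  congr 1
  · exact one_div _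
  · field_simp
    ring

end

/-- `𝒢` inverts `ℋₙ` on `(Ker ℋₙ)^⊥`; in particular `ℋₙ` is a bijection on
`(Ker ℋₙ)^⊥`. -/
theorem stmt5 (b c s : ℝ) (hbs : b * s ≠ 0) (h4 : 4 * c * s - b ≠ 0)
    (n : Fin 3 → ℝ) (hn : (∑ i, n i * n i) = 1) :
    (∀ Q ∈ kerPerp n, Ginv b c s n (Hn b c s n Q) = Q ∧ Hn b c s n (Ginv b c s n Q) = Q) ∧
    Set.BijOn (Hn b c s n) (kerPerp n) (kerPerp n) := by
  have hμ : s * (4 * c * s - b) / 3 ≠ 0 :=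
    div_ne_zero (mul_ne_zero (right_ne_zero_of_mul hbs) h4) three_ne_zero
  have hH : Set.MapsTo (Hn b c s n) (kerPerp n) (kerPerp n) := fun Q hQ => by
    rw [Hn_eq_scaleUniaxial hn b c s hQ]
    exact scaleUniaxial_mem_kerPerp hn _ _ hQ
  have hG : Set.MapsTo (Ginv b c s n) (kerPerp n) (kerPerp n) := fun Q hQ => by
    rw [Ginv_eq_scaleUniaxial hn hbs h4 hQ]
    exact scaleUniaxial_mem_kerPerp hn _ _ hQ
  have hinv : Set.InvOn (Ginv b c s n) (Hn b c s n) (kerPerp n) (kerPerp n) := by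
    constructor
    · intro Q hQ
      rw [Hn_eq_scaleUniaxial hn b c s hQ,
        Ginv_eq_scaleUniaxial hn hbs h4 (scaleUniaxial_mem_kerPerp hn _ _ hQ),
        scaleUniaxial_scaleUniaxial hn, inv_mul_cancel₀ hbs, inv_mul_cancel₀ hμ,
        scaleUniaxial_one_one]
    · intro Q hQ
      rw [Ginv_eq_scaleUniaxial hn hbs h4 hQ,
        Hn_eq_scaleUniaxial hn b c s (scaleUniaxial_mem_kerPerp hn _ _ hQ),
        scaleUniaxial_scaleUniaxial hn, mul_inv_cancel₀ hbs, mul_inv_cancel₀ hμ,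
        scaleUniaxial_one_one]
  exact ⟨fun Q hQ => ⟨hinv.1 hQ, hinv.2 hQ⟩, hinv.bijOn hH hG⟩
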